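/- arXiv:1107.3818 — 3 statements merged into one kernel-verified Lean document; each statement's English description precedes it below -/
import Mathlib

section
/- For t > -1, one can write h(t) = (1/2)·t²·ψ(t) where ψ(t) = 2((1+t)log(1+t) - t)/t² for t ≠ 0 and ψ(0) = 1; the function ψ is decreasing on (-1, ∞). -/
noncomputable def h (t : ℝ) : ℝ := (1 + t) * Real.log (1 + t) - t

noncomputable def psi (t : ℝ) : ℝ := if t = 0 then 1 else 2 * h t / t ^ 2

/-!
Away from `0`, `ψ' = -2 Q / t³` with `Q t = (t + 2) log (1 + t) - 2 t`. Since
`Q' = log (1 + t) - t / (1 + t) ≥ 0` and `Q 0 = 0`, `Q` has the sign of `t`, so `ψ` is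
antitone on `(-1, 0)` and on `(0, ∞)`. Across `0` it suffices that `ψ ≥ 1` on `(-1, 0]` and
`ψ ≤ 1` on `[0, ∞)`, i.e. that `t² - 2 h t` has the sign of `t`; this holds because its
derivative is `2 (t - log (1 + t)) ≥ 0`.
-/

open Real Set

section DerivSign

variable {D : Set ℝ} {f f' : ℝ → ℝ}

lemma monotoneOn_of_hasDerivAt_nonneg (hD : Convex ℝ D)
    (hf : ∀ x ∈ D, HasDerivAt f (f' x) x) (hf' : ∀ x ∈ D, 0 ≤ f' x) : MonotoneOn f D :=
  monotoneOn_of_hasDerivWithinAt_nonneg hD (fun x hx ↦ (hf x hx).continuousAt.continuousWithinAt)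
    (fun x hx ↦ (hf x (interior_subset hx)).hasDerivWithinAt)
    (fun x hx ↦ hf' x (interior_subset hx))

lemma antitoneOn_of_hasDerivAt_nonpos (hD : Convex ℝ D)
    (hf : ∀ x ∈ D, HasDerivAt f (f' x) x) (hf' : ∀ x ∈ D, f' x ≤ 0) : AntitoneOn f D :=
  antitoneOn_of_hasDerivWithinAt_nonpos hD (fun x hx ↦ (hf x hx).continuousAt.continuousWithinAt)
    (fun x hx ↦ (hf x (interior_subset hx)).hasDerivWithinAt)
    (fun x hx ↦ hf' x (interior_subset hx))

end DerivSign

lemma psi_of_ne_zero {t : ℝ} (ht : t ≠ 0) : psi t = 2 * h t / t ^ 2 := if_neg ht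

lemma hasDerivAt_log_one_add {t : ℝ} (ht : -1 < t) :
    HasDerivAt (fun t ↦ log (1 + t)) (1 + t)⁻¹ t := by
  simpa using ((hasDerivAt_id t).const_add 1).log (by simp; linarith)

lemma hasDerivAt_h {t : ℝ} (ht : -1 < t) : HasDerivAt h (log (1 + t)) t := by
  refine ((((hasDerivAt_id' t).const_add 1).mul (hasDerivAt_log_one_add ht)).sub
    (hasDerivAt_id' t)).congr_deriv ?_
  rw [mul_inv_cancel₀ (by linarith : 0 < 1 + t).ne']
  ring

lemma monotoneOn_sq_sub_two_mul_h : MonotoneOn (fun t ↦ t ^ 2 - 2 * h t) (Ioi (-1)) := by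
  refine monotoneOn_of_hasDerivAt_nonneg (convex_Ioi _)
    (fun t ht ↦ ((hasDerivAt_pow 2 t).sub ((hasDerivAt_h ht).const_mul 2))) fun t ht ↦ ?_
  have := log_le_sub_one_of_pos (show 0 < 1 + t by linarith [mem_Ioi.mp ht])
  norm_num
  linarith

lemma psi_le_one {t : ℝ} (ht : 0 ≤ t) : psi t ≤ 1 := by
  rcases ht.eq_or_lt with rfl | ht
  · simp [psi]
  have := monotoneOn_sq_sub_two_mul_h (by norm_num : (0 : ℝ) ∈ Ioi (-1))
    (by simp; linarith : t ∈ Ioi (-1)) ht.le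
  rw [psi_of_ne_zero ht.ne', div_le_one (by positivity)]
  simpa [h] using this

lemma one_le_psi {t : ℝ} (ht : -1 < t) (ht0 : t ≤ 0) : 1 ≤ psi t := by
  rcases ht0.eq_or_lt with rfl | ht0
  · simp [psi]
  have := monotoneOn_sq_sub_two_mul_h ht (by norm_num : (0 : ℝ) ∈ Ioi (-1)) ht0.le
  rw [psi_of_ne_zero ht0.ne, le_div_iff₀ (sq_pos_of_neg ht0)]
  simpa [h] using this

lemma monotoneOn_two_add_mul_log_sub :
    MonotoneOn (fun t ↦ (t + 2) * log (1 + t) - 2 * t) (Ioi (-1)) := by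
  refine monotoneOn_of_hasDerivAt_nonneg (convex_Ioi _) (fun t ht ↦
    ((((hasDerivAt_id' t).add_const 2).mul (hasDerivAt_log_one_add ht)).sub
      ((hasDerivAt_id' t).const_mul 2))) fun t ht ↦ ?_
  have hpos : 0 < 1 + t := by linarith [mem_Ioi.mp ht]
  have hlog := one_sub_inv_le_log_of_pos hpos
  have hsplit : (t + 2) * (1 + t)⁻¹ = 1 + (1 + t)⁻¹ := by field_simp; ring
  simp only [one_mul, mul_one, hsplit]
  linarith

lemma two_add_mul_log_sub_div_pow_three_nonneg {t : ℝ} (ht : -1 < t) :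
    0 ≤ ((t + 2) * log (1 + t) - 2 * t) / t ^ 3 := by
  have h0 : (0 : ℝ) ∈ Ioi (-1) := by norm_num
  rcases le_total t 0 with ht0 | ht0
  · have := monotoneOn_two_add_mul_log_sub ht h0 ht0
    exact div_nonneg_of_nonpos (by simpa using this) (Odd.pow_nonpos (by decide) ht0)
  · have := monotoneOn_two_add_mul_log_sub h0 (mem_Ioi.mpr ht) ht0
    exact div_nonneg (by simpa using this) (by positivity)

lemma hasDerivAt_psi {t : ℝ} (ht : -1 < t) (ht0 : t ≠ 0) :
    HasDerivAt psi (-2 * (((t + 2) * log (1 + t) - 2 * t) / t ^ 3)) t := by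
  have hquot := ((hasDerivAt_h ht).const_mul 2).div (hasDerivAt_pow 2 t) (pow_ne_zero 2 ht0)
  refine (hquot.congr_of_eventuallyEq ?_).congr_deriv ?_
  · filter_upwards [eventually_ne_nhds ht0] with s hs using psi_of_ne_zero hs
  · field_simp
    simp only [h]
    ring

lemma antitoneOn_psi {D : Set ℝ} (hD : Convex ℝ D) (hD_sub : D ⊆ Ioi (-1)) (hD0 : 0 ∉ D) :
    AntitoneOn psi D :=
  antitoneOn_of_hasDerivAt_nonpos hD
    (fun t ht ↦ hasDerivAt_psi (hD_sub ht) (ne_of_mem_of_not_mem ht hD0))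
    fun t ht ↦ by linarith [two_add_mul_log_sub_div_pow_three_nonneg (hD_sub ht)]

theorem psi_antitone : AntitoneOn psi (Set.Ioi (-1 : ℝ)) := by
  intro a ha b hb hab
  rcases lt_or_ge b 0 with hb0 | hb0
  · exact antitoneOn_psi (convex_Ioo _ _) Ioo_subset_Ioi_self (by simp)
      ⟨ha, hab.trans_lt hb0⟩ ⟨hb, hb0⟩ hab
  rcases lt_or_ge 0 a with ha0 | ha0
  · exact antitoneOn_psi (convex_Ioi _) (Ioi_subset_Ioi (by norm_num)) (by simp)
      ha0 (ha0.trans_le hab) hab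
  · exact (psi_le_one hb0).trans (one_le_psi ha ha0)
end

section
/- For all t ≥ 0, ψ(t) ≥ 2·log(1+2t)/(1+2t), where ψ(t) = 2((1+t)log(1+t) - t)/t² for t > 0 and ψ(0) = 1. Equivalently, (1+t)log(1+t) - t ≥ t²·log(1+2t)/(1+2t) for all t ≥ 0. -/
/-!
Write `log (1 + 2t) = log (1 + t) + log (1 + t / (1 + t))`; the claim becomes
`t (1 + 2t) + t² log (1 + t / (1 + t)) ≤ (1 + 3t + t²) log (1 + t)`.
Both logarithms are of the form `log (1 + a) = 2 artanh (a / (a + 2))`, so the truncated artanh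
series bounds `log (1 + t)` from below and, with its geometric tail bound, `log (1 + t / (1 + t))`
from above. Four and two terms suffice: the resulting rational inequality is `t² G(t) ≥ 0` for a
polynomial `G` of degree 12 that is nonnegative on `[0, ∞)`.
-/

open Real Finset

namespace Real

theorem one_add_div_div_one_sub_div {a : ℝ} (ha : 0 ≤ a) :
    (1 + a / (a + 2)) / (1 - a / (a + 2)) = 1 + a := by
  field_simp
  ring

theorem sum_range_le_log_one_add {a : ℝ} (ha : 0 ≤ a) (n : ℕ) :
    2 * ∑ i ∈ range n, (a / (a + 2)) ^ (2 * i + 1) / (2 * i + 1) ≤ log (1 + a) := by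
  have := sum_range_le_log_div (x := a / (a + 2)) (by positivity)
    ((div_lt_one (by positivity)).2 (by linarith)) n
  rw [one_add_div_div_one_sub_div ha] at this
  linarith

theorem log_one_add_le_sum_range_add {a : ℝ} (ha : 0 ≤ a) (n : ℕ) :
    log (1 + a) ≤ 2 * (∑ i ∈ range n, (a / (a + 2)) ^ (2 * i + 1) / (2 * i + 1) +
      (a / (a + 2)) ^ (2 * n + 1) / (1 - (a / (a + 2)) ^ 2)) := by
  have := log_div_le_sum_range_add (x := a / (a + 2)) (by positivity)
    ((div_lt_one (by positivity)).2 (by linarith)) n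
  rw [one_add_div_div_one_sub_div ha] at this
  linarith

end Real

theorem certificate_polynomial_nonneg {t : ℝ} (ht : 0 ≤ t) :
    0 ≤ 107520 + 931840 * t + 3395840 * t ^ 2 + 6691328 * t ^ 3 + 7483392 * t ^ 4 +
      4172032 * t ^ 5 - 30688 * t ^ 6 - 1553096 * t ^ 7 - 827368 * t ^ 8 - 21342 * t ^ 9 +
      141358 * t ^ 10 + 56578 * t ^ 11 + 7391 * t ^ 12 := by
  have hsq : ∀ k : ℕ, 0 ≤ t ^ k * (t - 2) ^ 2 := fun k => by positivity
  have hpow : ∀ k : ℕ, 0 ≤ t ^ k := fun k => by positivity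
  -- `G` is a nonnegative combination of these; it comes closest to vanishing near `t = 2`.
  linarith [hsq 4, hsq 5, hsq 6, hsq 7, hsq 8, hsq 9,
    hpow 2, hpow 3, hpow 7, hpow 11, hpow 12]

theorem truncated_log_inequality {t : ℝ} (ht : 0 ≤ t) :
    let x := t / (t + 2)
    let y := t / (3 * t + 2)
    t * (1 + 2 * t) + t ^ 2 * (2 * (y + y ^ 3 / 3 + y ^ 5 / (1 - y ^ 2))) ≤
      (1 + 3 * t + t ^ 2) * (2 * (x + x ^ 3 / 3 + x ^ 5 / 5 + x ^ 7 / 7)) := by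
  intro x y
  have hy : 1 - y ^ 2 = 4 * (2 * t + 1) * (t + 1) / (3 * t + 2) ^ 2 := by
    simp only [y]
    field_simp
    ring
  have hdiff : (1 + 3 * t + t ^ 2) * (2 * (x + x ^ 3 / 3 + x ^ 5 / 5 + x ^ 7 / 7)) -
      (t * (1 + 2 * t) + t ^ 2 * (2 * (y + y ^ 3 / 3 + y ^ 5 / (1 - y ^ 2)))) =
      t ^ 2 * (107520 + 931840 * t + 3395840 * t ^ 2 + 6691328 * t ^ 3 + 7483392 * t ^ 4 +
        4172032 * t ^ 5 - 30688 * t ^ 6 - 1553096 * t ^ 7 - 827368 * t ^ 8 - 21342 * t ^ 9 +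
        141358 * t ^ 10 + 56578 * t ^ 11 + 7391 * t ^ 12) /
      (210 * (t + 2) ^ 7 * (3 * t + 2) ^ 3 * (2 * t + 1) * (t + 1)) := by
    rw [hy]
    simp only [x, y]
    field_simp
    ring
  rw [← sub_nonneg, hdiff]
  exact div_nonneg (mul_nonneg (sq_nonneg t) (certificate_polynomial_nonneg ht)) (by positivity)

theorem h_ge_sq_log (t : ℝ) (ht : 0 ≤ t) :
    t ^ 2 * Real.log (1 + 2 * t) / (1 + 2 * t) ≤ h t := by
  have hsplit : log (1 + 2 * t) = log (1 + t) + log (1 + t / (1 + t)) := by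
    rw [← log_mul (by positivity) (by positivity)]
    congr 1
    field_simp
    ring
  have hlower := sum_range_le_log_one_add ht 4
  have hupper := log_one_add_le_sum_range_add (a := t / (1 + t)) (by positivity) 2
  rw [show t / (1 + t) / (t / (1 + t) + 2) = t / (3 * t + 2) by field_simp; ring] at hupper
  simp only [sum_range_succ, sum_range_zero] at hlower hupper
  norm_num at hlower hupper
  have hrational := truncated_log_inequality ht
  rw [div_le_iff₀ (by positivity), h, hsplit]
  linarith [mul_le_mul_of_nonneg_left hlower (by positivity : (0 : ℝ) ≤ 1 + 3 * t + t ^ 2),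
    mul_le_mul_of_nonneg_left hupper (sq_nonneg t)]
end

section
/- For integers k = 3 and k = 4, the function M_k(b) = (1+b)log(1+b) + (k-1-b)log(1 - b/(k-1)) - (k/(k-1))·ρ_k·b² with ρ_k = log(k-1)/(k-1) is convex on [0, k-1) and attains its minimum value zero at b = 0. -/
noncomputable def rho (k : ℕ) : ℝ := Real.log ((k : ℝ) - 1) / ((k : ℝ) - 1)

noncomputable def M (k : ℕ) (b : ℝ) : ℝ :=
  (1 + b) * Real.log (1 + b) + ((k : ℝ) - 1 - b) * Real.log (1 - b / ((k : ℝ) - 1))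
    - (k : ℝ) * rho k * b ^ 2 / ((k : ℝ) - 1)

open Real Set

/-! With `c = k - 1` one has `M_k'' b = k / ((1 + b)(c - b)) - 2kρ_k / c`. Since
`(1 + b) + (c - b) = k`, AM–GM gives `(1 + b)(c - b) ≤ k² / 4`, so `M_k'' ≥ 0` as soon as
`k² log c ≤ 2c²`; this holds for `k = 3, 4` (and fails from `k = 5` on). A convex function whose
right derivative vanishes at the left endpoint `0` is minimal there, and `M_k 0 = 0`. -/

theorem ConvexOn.apply_le_of_hasDerivWithinAt_Ioi_zero {S : Set ℝ} {f : ℝ → ℝ} {x y : ℝ}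
    (hf : ConvexOn ℝ S f) (hx : x ∈ S) (hy : y ∈ S) (hxy : x ≤ y)
    (hf' : HasDerivWithinAt f 0 (Ioi x) x) : f x ≤ f y := by
  rcases hxy.eq_or_lt with rfl | hlt
  · rfl
  have := hf.le_slope_of_hasDerivWithinAt_Ioi hx hy hlt hf'
  rw [slope_def_field, le_div_iff₀ (sub_pos.2 hlt)] at this
  linarith

noncomputable def M' (k : ℕ) (b : ℝ) : ℝ :=
  log (1 + b) - log (1 - b / ((k : ℝ) - 1)) - 2 * k * rho k * b / ((k : ℝ) - 1)

noncomputable def M'' (k : ℕ) (b : ℝ) : ℝ :=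
  k / ((1 + b) * ((k : ℝ) - 1 - b)) - 2 * k * rho k / ((k : ℝ) - 1)

section

variable {k : ℕ} {b : ℝ}

lemma sub_one_pos_of_two_le (hk : 2 ≤ k) : (0 : ℝ) < (k : ℝ) - 1 := by
  have : (2 : ℝ) ≤ k := by exact_mod_cast hk
  linarith

theorem hasDerivAt_M (hk : 2 ≤ k) (hb : b ∈ Ioo (-1 : ℝ) ((k : ℝ) - 1)) :
    HasDerivAt (M k) (M' k b) b := by
  have hc := (sub_one_pos_of_two_le hk).ne'
  have h1 : 1 + b ≠ 0 := by linarith [hb.1]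
  have h2 : (k : ℝ) - 1 - b ≠ 0 := by linarith [hb.2]
  have h3 : 1 - b / ((k : ℝ) - 1) ≠ 0 :=
    (sub_pos.2 ((div_lt_one (sub_one_pos_of_two_le hk)).2 hb.2)).ne'
  have hid := hasDerivAt_id b
  have := (((hid.const_add 1).mul ((hid.const_add 1).log h1)).add
    ((hid.const_sub ((k : ℝ) - 1)).mul (((hid.div_const _).const_sub 1).log h3))).sub
    (((hasDerivAt_pow 2 b).const_mul (k * rho k)).div_const ((k : ℝ) - 1))
  refine HasDerivAt.congr_deriv (f := M k) this ?_
  rw [M']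
  simp only [id]
  field_simp
  ring

theorem hasDerivAt_M' (hk : 2 ≤ k) (hb : b ∈ Ioo (-1 : ℝ) ((k : ℝ) - 1)) :
    HasDerivAt (M' k) (M'' k b) b := by
  have hc := (sub_one_pos_of_two_le hk).ne'
  have h1 : 1 + b ≠ 0 := by linarith [hb.1]
  have h2 : (k : ℝ) - 1 - b ≠ 0 := by linarith [hb.2]
  have h3 : 1 - b / ((k : ℝ) - 1) ≠ 0 :=
    (sub_pos.2 ((div_lt_one (sub_one_pos_of_two_le hk)).2 hb.2)).ne'
  have hid := hasDerivAt_id b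
  have := (((hid.const_add 1).log h1).sub (((hid.div_const _).const_sub 1).log h3)).sub
    ((hid.const_mul (2 * k * rho k)).div_const ((k : ℝ) - 1))
  refine HasDerivAt.congr_deriv (f := M' k) this ?_
  rw [M'']
  simp only [id]
  field_simp
  ring

theorem M''_nonneg (hk : 2 ≤ k) (hlog : (k : ℝ) ^ 2 * log ((k : ℝ) - 1) ≤ 2 * ((k : ℝ) - 1) ^ 2)
    (hb : b ∈ Ioo (-1 : ℝ) ((k : ℝ) - 1)) : 0 ≤ M'' k b := by
  have hc := sub_one_pos_of_two_le hk
  have hk0 : (0 : ℝ) < k := by linarith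
  have hp : 0 < (1 + b) * ((k : ℝ) - 1 - b) := mul_pos (by linarith [hb.1]) (by linarith [hb.2])
  have hamgm : 4 * ((1 + b) * ((k : ℝ) - 1 - b)) ≤ (k : ℝ) ^ 2 := by
    nlinarith [sq_nonneg (1 + 2 * b - ((k : ℝ) - 1))]
  rw [M'', sub_nonneg]
  calc 2 * k * rho k / ((k : ℝ) - 1) = 2 * k * log ((k : ℝ) - 1) / ((k : ℝ) - 1) ^ 2 := by
        rw [rho]; field_simp
    _ ≤ 4 / k := by rw [div_le_div_iff₀ (by positivity) hk0]; nlinarith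
    _ ≤ k / ((1 + b) * ((k : ℝ) - 1 - b)) := by rw [div_le_div_iff₀ hk0 hp]; nlinarith

theorem convexOn_M (hk : 2 ≤ k) (hlog : (k : ℝ) ^ 2 * log ((k : ℝ) - 1) ≤ 2 * ((k : ℝ) - 1) ^ 2) :
    ConvexOn ℝ (Ico 0 ((k : ℝ) - 1)) (M k) := by
  have hIoo : Ioo 0 ((k : ℝ) - 1) ⊆ Ioo (-1) ((k : ℝ) - 1) := Ioo_subset_Ioo_left (by norm_num)
  refine convexOn_of_hasDerivWithinAt2_nonneg (f' := M' k) (f'' := M'' k) (convex_Ico 0 _)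
    (fun x hx ↦ (hasDerivAt_M hk ⟨by linarith [hx.1], hx.2⟩).continuousAt.continuousWithinAt)
    ?_ ?_ ?_ <;> rw [interior_Ico]
  · exact fun x hx ↦ (hasDerivAt_M hk (hIoo hx)).hasDerivWithinAt
  · exact fun x hx ↦ (hasDerivAt_M' hk (hIoo hx)).hasDerivWithinAt
  · exact fun x hx ↦ M''_nonneg hk hlog (hIoo hx)

theorem M_zero (k : ℕ) : M k 0 = 0 := by simp [M]

theorem M_nonneg (hk : 2 ≤ k) (hlog : (k : ℝ) ^ 2 * log ((k : ℝ) - 1) ≤ 2 * ((k : ℝ) - 1) ^ 2)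
    (hb : b ∈ Ico 0 ((k : ℝ) - 1)) : 0 ≤ M k b := by
  have hc := sub_one_pos_of_two_le hk
  have hM' : HasDerivAt (M k) 0 0 := by
    simpa [M'] using hasDerivAt_M hk ⟨by norm_num, hc⟩
  rw [← M_zero k]
  exact (convexOn_M hk hlog).apply_le_of_hasDerivWithinAt_Ioi_zero ⟨le_rfl, hc⟩ hb hb.1
    hM'.hasDerivWithinAt

end

theorem M_convex_min (k : ℕ) (hk : k = 3 ∨ k = 4) :
    ConvexOn ℝ (Set.Ico (0 : ℝ) ((k : ℝ) - 1)) (M k) ∧ M k 0 = 0 ∧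
      ∀ b ∈ Set.Ico (0 : ℝ) ((k : ℝ) - 1), 0 ≤ M k b := by
  have hk2 : 2 ≤ k := by omega
  have hlog : (k : ℝ) ^ 2 * log ((k : ℝ) - 1) ≤ 2 * ((k : ℝ) - 1) ^ 2 := by
    rcases hk with rfl | rfl <;> norm_num
    · linarith [log_two_lt_d9]
    · linarith [log_three_lt_d9]
  exact ⟨convexOn_M hk2 hlog, M_zero k, fun b hb ↦ M_nonneg hk2 hlog hb⟩
end
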